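/- arXiv:1108.5964 — 2 statements merged into one kernel-verified Lean document; each statement's English description precedes it below -/
import Mathlib

section
/- Let t ≥ 2 be an integer. For complex q with |q| < 1/2 and complex u with |u| ≤ 1, define G(q,u) := u + Σ q^{b_1+⋯+b_l} u^{t·b_l}, the sum being over all nonempty finite sequences (b_1, …, b_l) of positive integers with b_1 = 1 and b_i ≤ t·b_{i−1} for 2 ≤ i ≤ l. Then this series converges absolutely and G(q,u) − u = (q u^t/(1 − q u^t)) · (G(q,1) − G(q, q u^t)). -/
/-!
Sequences of positive integers with sum `n` are the compositions of `n`, of which there are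
`2^(n-1)`, so the series is dominated by `∑ (2‖q‖)^n` and converges absolutely.

For the functional equation, drop the last entry `m` of a sequence other than `[1]`: what remains
is a shorter sequence `b`, and `m` ranges freely over `1, …, t·b_l`. With `v = q u^t`, the term of
`b ++ [m]` is `q^(Σ b) v^m`, so the terms lying over `b` form a geometric sum equal to
`v / (v - 1) · (q^(Σ b) v^(t b_l) - q^(Σ b))`. Summing over `b` gives
`G(q,u) - u = v + v / (v - 1) · ((G(q,v) - v) - (G(q,1) - 1))`.
-/

noncomputable section

/-- A "bounded degree sequence": positive integers, first entry 1,
`b_{i+1} ≤ t b_i`. -/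
def IsBSeq (t : ℕ) (l : List ℕ) : Prop :=
  (∀ x ∈ l, 0 < x) ∧ (l ≠ [] → l.headI = 1) ∧
  ∀ i (h : i + 1 < l.length), l.get ⟨i + 1, h⟩ ≤ t * l.get ⟨i, Nat.lt_of_succ_lt h⟩

/-- The generating function `G(q,u) = u + Σ_b q^(b_1+⋯+b_l) u^(t·b_l)`, the sum
being over all nonempty bounded degree sequences `b`. -/
def Gfun (t : ℕ) (q u : ℂ) : ℂ :=
  u + ∑' b : {l : List ℕ // IsBSeq t l ∧ l ≠ []},
        q ^ (b : List ℕ).sum * u ^ (t * (b : List ℕ).getLastD 0)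

open Finset

lemma summable_sigma_composition_pow {r : ℝ} (h0 : 0 ≤ r) (hr : r < 1 / 2) :
    Summable (fun c : Σ n, Composition n => r ^ c.1) := by
  refine (summable_sigma_of_nonneg fun _ => by positivity).2 ⟨fun _ => .of_finite, ?_⟩
  refine (summable_geometric_of_lt_one (by positivity) (by linarith : 2 * r < 1)).of_nonneg_of_le
    (fun n => tsum_nonneg fun _ => by positivity) fun n => ?_
  simp only [tsum_fintype, sum_const, card_univ, composition_card, nsmul_eq_mul, mul_pow]
  push_cast
  gcongr
  exacts [one_le_two, Nat.sub_le n 1]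

lemma summable_pow_sum_of_forall_pos {r : ℝ} (h0 : 0 ≤ r) (hr : r < 1 / 2) :
    Summable (fun l : {l : List ℕ // ∀ x ∈ l, 0 < x} => r ^ l.1.sum) := by
  let toComposition : {l : List ℕ // ∀ x ∈ l, 0 < x} → Σ n, Composition n :=
    fun l => ⟨l.1.sum, ⟨l.1, l.2 _, rfl⟩⟩
  have hinj : Function.Injective toComposition :=
    Function.LeftInverse.injective (g := fun c => ⟨c.2.blocks, fun _ => c.2.blocks_pos⟩)
      fun _ => rfl
  exact (summable_sigma_composition_pow h0 hr).comp_injective hinj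

theorem Summable.tsum_eq_add_tsum_ne {β M : Type*} [AddCommGroup M] [TopologicalSpace M]
    [IsTopologicalAddGroup M] [T2Space M] {f : β → M} (hf : Summable f) (b : β) :
    ∑' x, f x = f b + ∑' x : {x // x ≠ b}, f x := by
  classical
  rw [hf.tsum_eq_add_tsum_ite b]
  congr 1
  refine ((tsum_subtype {x | x ≠ b} f).trans (tsum_congr fun x => ?_)).symm
  simp only [Set.indicator_apply, Set.mem_ofPred_eq, ite_not]

lemma isBSeq_iff_isChain {t : ℕ} {l : List ℕ} : IsBSeq t l ↔
    (∀ x ∈ l, 0 < x) ∧ (l ≠ [] → l.headI = 1) ∧ l.IsChain (fun a b => b ≤ t * a) := by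
  rw [List.isChain_iff_getElem]
  rfl

lemma isBSeq_concat_iff {t m : ℕ} {l : List ℕ} (hl : l ≠ []) :
    IsBSeq t (l ++ [m]) ↔ IsBSeq t l ∧ 0 < m ∧ m ≤ t * l.getLastD 0 := by
  have hhead : (l ++ [m]).headI = l.headI := by cases l <;> trivial
  simp only [isBSeq_iff_isChain, List.mem_append, List.mem_cons, List.not_mem_nil, or_false, or_imp,
    forall_and, forall_eq, ne_eq, List.append_eq_nil_iff, hl, List.cons_ne_self, and_self,
    not_false_eq_true, hhead, forall_const, List.isChain_append, List.IsChain.singleton,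
    List.getLast?_eq_some_getLast hl, Option.mem_def, Option.some.injEq, List.head?_cons,
    forall_eq', true_and, List.getLastD_eq_getLast?, Option.getD_some]
  tauto

abbrev BSeq (t : ℕ) := {l : List ℕ // IsBSeq t l ∧ l ≠ []}

namespace BSeq

variable {t : ℕ}

def single (t : ℕ) : BSeq t := ⟨[1], by simp [isBSeq_iff_isChain]⟩

lemma dropLast_ne_nil {b : BSeq t} (hb : b ≠ single t) : b.1.dropLast ≠ [] := by
  obtain ⟨l, hl, hne⟩ := b
  intro h
  obtain ⟨x, rfl⟩ : ∃ x, l = [x] :=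
    ⟨_, by simpa [h] using (List.dropLast_concat_getLast hne).symm⟩
  obtain rfl : x = 1 := hl.2.1 hne
  exact hb rfl

lemma dropLast_concat_getLastD {l : List ℕ} (hl : l ≠ []) :
    l.dropLast ++ [l.getLastD 0] = l := by
  simpa [List.getLast?_eq_some_getLast hl] using List.dropLast_concat_getLast hl

lemma isBSeq_dropLast {b : BSeq t} (hb : b ≠ single t) :
    IsBSeq t b.1.dropLast ∧ 0 < b.1.getLastD 0 ∧ b.1.getLastD 0 ≤ t * b.1.dropLast.getLastD 0 :=
  (isBSeq_concat_iff (dropLast_ne_nil hb)).1 (by rw [dropLast_concat_getLastD b.2.2]; exact b.2.1)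

def concat (b : BSeq t) (i : Fin (t * b.1.getLastD 0)) : BSeq t :=
  ⟨b.1 ++ [(i : ℕ) + 1], (isBSeq_concat_iff b.2.2).2 ⟨b.2.1, i.1.succ_pos, i.2⟩, by simp⟩

lemma coe_concat (b : BSeq t) (i : Fin (t * b.1.getLastD 0)) :
    (concat b i).1 = b.1 ++ [(i : ℕ) + 1] := rfl

lemma concat_ne_single (b : BSeq t) (i : Fin (t * b.1.getLastD 0)) : concat b i ≠ single t :=
  fun h => b.2.2 (by simpa [concat, single] using congrArg (·.1.dropLast) h)

def concatEquiv (t : ℕ) :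
    (Σ b : BSeq t, Fin (t * b.1.getLastD 0)) ≃ {b : BSeq t // b ≠ single t} where
  toFun σ := ⟨concat σ.1 σ.2, concat_ne_single σ.1 σ.2⟩
  invFun b := ⟨⟨b.1.1.dropLast, (isBSeq_dropLast b.2).1, dropLast_ne_nil b.2⟩,
    ⟨b.1.1.getLastD 0 - 1, show _ < t * b.1.1.dropLast.getLastD 0 by
      have := isBSeq_dropLast b.2; omega⟩⟩
  left_inv := by
    rintro ⟨b, i⟩
    have h : (b.1 ++ [(i : ℕ) + 1]).dropLast = b.1 := List.dropLast_concat ..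
    exact Sigma.ext (Subtype.ext h)
      ((Fin.heq_ext_iff (congrArg (t * ·.getLastD 0) h)).2 (by simp [concat]))
  right_inv b := by
    have := (isBSeq_dropLast b.2).2.1
    refine Subtype.ext (Subtype.ext ?_)
    simp only [concat, Nat.sub_add_cancel this]
    exact dropLast_concat_getLastD b.1.2.2

end BSeq

def gfunTerm (t : ℕ) (q u : ℂ) (l : List ℕ) : ℂ := q ^ l.sum * u ^ (t * l.getLastD 0)

section GeneratingFunction

variable {t : ℕ} {q u : ℂ}

lemma Gfun_eq (t : ℕ) (q u : ℂ) : Gfun t q u = u + ∑' b : BSeq t, gfunTerm t q u b.1 := rfl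

lemma norm_mul_pow_le (hu : ‖u‖ ≤ 1) (n : ℕ) : ‖q * u ^ n‖ ≤ ‖q‖ := by
  rw [norm_mul, norm_pow]
  exact mul_le_of_le_one_right (norm_nonneg q) (pow_le_one₀ (norm_nonneg u) hu)

lemma norm_gfunTerm_le (hu : ‖u‖ ≤ 1) (l : List ℕ) : ‖gfunTerm t q u l‖ ≤ ‖q‖ ^ l.sum := by
  rw [gfunTerm, norm_mul, norm_pow, norm_pow]
  exact mul_le_of_le_one_right (by positivity) (pow_le_one₀ (norm_nonneg u) hu)

lemma summable_norm_gfunTerm (hq : ‖q‖ < 1 / 2) (hu : ‖u‖ ≤ 1) :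
    Summable fun b : BSeq t => ‖gfunTerm t q u b.1‖ := by
  have hinj : Function.Injective
      fun b : BSeq t => (⟨b.1, b.2.1.1⟩ : {l : List ℕ // ∀ x ∈ l, 0 < x}) :=
    fun _ _ h => Subtype.ext (by simpa using congrArg Subtype.val h)
  exact ((summable_pow_sum_of_forall_pos (norm_nonneg q) hq).comp_injective hinj).of_nonneg_of_le
    (fun _ => norm_nonneg _) fun b => norm_gfunTerm_le hu b.1

lemma gfunTerm_concat (l : List ℕ) (m : ℕ) :
    gfunTerm t q u (l ++ [m]) = q ^ l.sum * (q * u ^ t) ^ m := by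
  simp only [gfunTerm, List.sum_append, List.sum_singleton, List.getLastD_concat, pow_add, mul_pow,
    ← pow_mul]
  ring

lemma sum_gfunTerm_concat (hv : q * u ^ t ≠ 1) (l : List ℕ) :
    ∑ i : Fin (t * l.getLastD 0), gfunTerm t q u (l ++ [(i : ℕ) + 1]) =
      q * u ^ t / (q * u ^ t - 1) * (gfunTerm t q (q * u ^ t) l - gfunTerm t q 1 l) := by
  simp only [gfunTerm_concat]
  rw [← mul_sum, Fin.sum_univ_eq_sum_range (fun i => (q * u ^ t) ^ (i + 1))]
  simp only [pow_succ, ← sum_mul, geom_sum_eq hv, gfunTerm, one_pow, mul_one]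
  field_simp

theorem Gfun_sub_eq (hu : Summable fun b : BSeq t => gfunTerm t q u b.1)
    (h1 : Summable fun b : BSeq t => gfunTerm t q 1 b.1)
    (hv : Summable fun b : BSeq t => gfunTerm t q (q * u ^ t) b.1) (hv1 : q * u ^ t ≠ 1) :
    Gfun t q u - u = q * u ^ t / (1 - q * u ^ t) * (Gfun t q 1 - Gfun t q (q * u ^ t)) := by
  have hsplit : Gfun t q u - u = q * u ^ t + ∑' σ : Σ b : BSeq t, Fin (t * b.1.getLastD 0),
      gfunTerm t q u (BSeq.concat σ.1 σ.2).1 := by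
    rw [Gfun_eq, add_sub_cancel_left, hu.tsum_eq_add_tsum_ne (BSeq.single t),
      ← (BSeq.concatEquiv t).tsum_eq]
    exact congrArg₂ (· + ·) (by simp [gfunTerm, BSeq.single]) rfl
  have hsigma : Summable fun σ : Σ b : BSeq t, Fin (t * b.1.getLastD 0) =>
      gfunTerm t q u (BSeq.concat σ.1 σ.2).1 :=
    hu.comp_injective (Subtype.val_injective.comp (BSeq.concatEquiv t).injective)
  rw [Gfun_eq t q 1, Gfun_eq t q (q * u ^ t), hsplit, hsigma.tsum_sigma]
  simp only [tsum_fintype, BSeq.coe_concat, sum_gfunTerm_concat hv1, tsum_mul_left,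
    hv.tsum_sub h1]
  have h1v : 1 - q * u ^ t ≠ 0 := sub_ne_zero.2 hv1.symm
  have hv1' : q * u ^ t - 1 ≠ 0 := sub_ne_zero.2 hv1
  field_simp
  ring

end GeneratingFunction

theorem stmt_1_general (t : ℕ) (q u : ℂ) (hq : ‖q‖ < 1 / 2) (hu : ‖u‖ ≤ 1) :
    Summable (fun b : {l : List ℕ // IsBSeq t l ∧ l ≠ []} =>
      ‖q ^ (b : List ℕ).sum * u ^ (t * (b : List ℕ).getLastD 0)‖) ∧
    Gfun t q u - u =
      q * u ^ t / (1 - q * u ^ t) * (Gfun t q 1 - Gfun t q (q * u ^ t)) := by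
  have hv : ‖q * u ^ t‖ < 1 / 2 := (norm_mul_pow_le hu t).trans_lt hq
  have hv1 : q * u ^ t ≠ 1 := fun h => by norm_num [h] at hv
  refine ⟨summable_norm_gfunTerm hq hu, Gfun_sub_eq ?_ ?_ ?_ hv1⟩
  exacts [(summable_norm_gfunTerm hq hu).of_norm, (summable_norm_gfunTerm hq norm_one.le).of_norm,
    (summable_norm_gfunTerm hq (by linarith)).of_norm]

theorem stmt_1 (t : ℕ) (ht : 2 ≤ t) (q u : ℂ) (hq : ‖q‖ < 1 / 2) (hu : ‖u‖ ≤ 1) :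
    Summable (fun b : {l : List ℕ // IsBSeq t l ∧ l ≠ []} =>
      ‖q ^ (b : List ℕ).sum * u ^ (t * (b : List ℕ).getLastD 0)‖) ∧
    Gfun t q u - u =
      q * u ^ t / (1 - q * u ^ t) * (Gfun t q 1 - Gfun t q (q * u ^ t)) :=
  stmt_1_general t q u hq hu
end
end

section
/- Let t ≥ 2 be an integer, K ≥ 0 an integer, and q a complex number with |q|^{[K+1]} < 1/2. Then |N(q) − N_K(q)| ≤ ((1 − |q|^{[K+1]})/(1 − 2|q|^{[K+1]})) · (Π_{j=1}^{K} 1/(1 − |q|^{[j]})) · |q|^{[K] + Σ_{j=1}^{K} [j]} and |D(q) − D_K(q)| ≤ ((1 − |q|^{[K+1]})/(1 − 2|q|^{[K+1]})) · (Π_{j=1}^{K} 1/(1 − |q|^{[j]})) · |q|^{Σ_{j=1}^{K} [j]}. -/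
/-!
With `r = ‖q‖` and `x = r^[K+1] < 1/2`, each factor obeys `‖f_j‖ ≤ r^[j] / (1 - r^[j])`, and for
`j > K` this is at most `ρ = x / (1 - x) < 1`. Hence the `k`-th term of either series, `k ≥ K`, is
bounded by `∏_{j ≤ K} r^[j] / (1 - r^[j])` times `ρ^(k-K)` (times `r^[K]` for `N`), and summing the
geometric tail gives the factor `1 / (1 - ρ) = (1 - x) / (1 - 2x)`.
-/

noncomputable section

/-- `[k] = 1 + t + t^2 + ⋯ + t^(k-1)`. -/
def brk (t k : ℕ) : ℕ := ∑ i ∈ Finset.range k, t ^ i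

/-- `f_j(q) = q^[j] / (1 - q^[j])`. -/
def ff (t : ℕ) (q : ℂ) (j : ℕ) : ℂ := q ^ brk t j / (1 - q ^ brk t j)

/-- `N(q) = Σ_{k≥0} (-1)^k q^[k] Π_{j=1}^k f_j(q)`. -/
def Nfun (t : ℕ) (q : ℂ) : ℂ :=
  ∑' k : ℕ, (-1 : ℂ) ^ k * q ^ brk t k * ∏ j ∈ Finset.Icc 1 k, ff t q j

/-- `D(q) = Σ_{k≥0} (-1)^k Π_{j=1}^k f_j(q)`. -/
def Dfun (t : ℕ) (q : ℂ) : ℂ :=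
  ∑' k : ℕ, (-1 : ℂ) ^ k * ∏ j ∈ Finset.Icc 1 k, ff t q j

/-- Partial sum `N_K(q)`. -/
def NK (t K : ℕ) (q : ℂ) : ℂ :=
  ∑ k ∈ Finset.range K, (-1 : ℂ) ^ k * q ^ brk t k * ∏ j ∈ Finset.Icc 1 k, ff t q j

/-- Partial sum `D_K(q)`. -/
def DK (t K : ℕ) (q : ℂ) : ℂ :=
  ∑ k ∈ Finset.range K, (-1 : ℂ) ^ k * ∏ j ∈ Finset.Icc 1 k, ff t q j

open Finset

theorem norm_div_one_sub_le {𝕜 : Type*} [NormedField 𝕜] {z : 𝕜} (hz : ‖z‖ < 1) :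
    ‖z / (1 - z)‖ ≤ ‖z‖ / (1 - ‖z‖) := by
  have hden : 1 - ‖z‖ ≤ ‖1 - z‖ := by
    simpa using norm_sub_norm_le (1 : 𝕜) z
  rw [norm_div]
  exact div_le_div₀ (norm_nonneg z) le_rfl (by linarith) hden

theorem norm_tsum_sub_sum_range_le_of_geometric {E : Type*} [NormedAddCommGroup E]
    [CompleteSpace E] {a : ℕ → E} {C ρ : ℝ} (hρ0 : 0 ≤ ρ) (hρ1 : ρ < 1) (K : ℕ)
    (ha : ∀ i, ‖a (i + K)‖ ≤ C * ρ ^ i) :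
    ‖∑' k, a k - ∑ k ∈ range K, a k‖ ≤ C * (1 - ρ)⁻¹ := by
  have hgeom := (hasSum_geometric_of_lt_one hρ0 hρ1).mul_left C
  have hsum : Summable a :=
    (summable_nat_add_iff K).mp (Summable.of_norm_bounded hgeom.summable ha)
  rw [← hsum.sum_add_tsum_nat_add K, add_sub_cancel_left]
  exact tsum_of_norm_bounded hgeom ha

theorem prod_Icc_le_prod_mul_pow {f g : ℕ → ℝ} {ρ : ℝ} {K : ℕ} (hf : ∀ j, 0 ≤ f j)
    (hfg : ∀ j ∈ Icc 1 K, f j ≤ g j) (hfρ : ∀ j, K < j → f j ≤ ρ) (i : ℕ) :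
    ∏ j ∈ Icc 1 (i + K), f j ≤ (∏ j ∈ Icc 1 K, g j) * ρ ^ i := by
  induction i with
  | zero => simpa using prod_le_prod (fun j _ => hf j) hfg
  | succ i ih =>
    rw [add_right_comm, prod_Icc_succ_top (by omega), pow_succ, ← mul_assoc]
    exact mul_le_mul ih (hfρ _ (by omega)) (hf _)
      (le_trans (prod_nonneg fun j _ => hf j) ih)

theorem brk_pos (t : ℕ) {j : ℕ} (hj : 1 ≤ j) : 0 < brk t j :=
  lt_of_lt_of_le (by simp) (single_le_sum (f := fun i => t ^ i) (fun i _ => Nat.zero_le _)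
    (mem_range.mpr hj))

theorem brk_mono (t : ℕ) : Monotone (brk t) := fun _ _ h =>
  sum_le_sum_of_subset (range_subset_range.mpr h)

section Tail

variable {t K : ℕ} {q : ℂ}

theorem norm_lt_one_of_pow_brk_lt (hq : ‖q‖ ^ brk t (K + 1) < 1 / 2) : ‖q‖ < 1 :=
  (pow_lt_one_iff_of_nonneg (norm_nonneg q) (brk_pos t (j := K + 1) (by omega)).ne').mp
    (by linarith)

theorem norm_ff_le (hq : ‖q‖ < 1) {j : ℕ} (hj : 1 ≤ j) :
    ‖ff t q j‖ ≤ ‖q‖ ^ brk t j / (1 - ‖q‖ ^ brk t j) := by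
  have h := norm_div_one_sub_le (z := q ^ brk t j) (by
    rw [norm_pow]; exact pow_lt_one₀ (norm_nonneg q) hq (brk_pos t hj).ne')
  rwa [norm_pow] at h

theorem norm_ff_le_of_lt (hq : ‖q‖ ^ brk t (K + 1) < 1 / 2) {j : ℕ} (hj : K < j) :
    ‖ff t q j‖ ≤ ‖q‖ ^ brk t (K + 1) / (1 - ‖q‖ ^ brk t (K + 1)) := by
  have hr1 := norm_lt_one_of_pow_brk_lt hq
  have hx : ‖q‖ ^ brk t j ≤ ‖q‖ ^ brk t (K + 1) :=
    pow_le_pow_of_le_one (norm_nonneg q) hr1.le (brk_mono t hj)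
  refine (norm_ff_le hr1 (by omega)).trans ?_
  exact div_le_div₀ (pow_nonneg (norm_nonneg q) _) hx (by linarith) (by linarith)

theorem norm_tsum_sub_sum_range_le (hq : ‖q‖ ^ brk t (K + 1) < 1 / 2)
    {c : ℕ → ℂ} {B : ℝ} (hB : 0 ≤ B) (hc : ∀ k, K ≤ k → ‖c k‖ ≤ B) :
    ‖(∑' k, (-1 : ℂ) ^ k * c k * ∏ j ∈ Icc 1 k, ff t q j) -
        ∑ k ∈ range K, (-1 : ℂ) ^ k * c k * ∏ j ∈ Icc 1 k, ff t q j‖ ≤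
      (1 - ‖q‖ ^ brk t (K + 1)) / (1 - 2 * ‖q‖ ^ brk t (K + 1)) *
        (∏ j ∈ Icc 1 K, (1 - ‖q‖ ^ brk t j)⁻¹) * B *
        ‖q‖ ^ (∑ j ∈ Icc 1 K, brk t j) := by
  set r := ‖q‖
  set x := r ^ brk t (K + 1)
  have hr1 : r < 1 := norm_lt_one_of_pow_brk_lt hq
  have hx0 : 0 ≤ x := pow_nonneg (norm_nonneg q) _
  have hρ1 : x / (1 - x) < 1 := (div_lt_one (by linarith)).mpr (by linarith)
  have hhead : ∏ j ∈ Icc 1 K, r ^ brk t j / (1 - r ^ brk t j) =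
      r ^ (∑ j ∈ Icc 1 K, brk t j) * ∏ j ∈ Icc 1 K, (1 - r ^ brk t j)⁻¹ := by
    rw [← prod_pow_eq_pow_sum, ← prod_mul_distrib]
    simp only [div_eq_mul_inv]
  have hterm : ∀ i, ‖(-1 : ℂ) ^ (i + K) * c (i + K) * ∏ j ∈ Icc 1 (i + K), ff t q j‖ ≤
      (B * ∏ j ∈ Icc 1 K, r ^ brk t j / (1 - r ^ brk t j)) * (x / (1 - x)) ^ i := by
    intro i
    rw [norm_mul, norm_mul, norm_pow, norm_neg, norm_one, one_pow, one_mul, norm_prod,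
      mul_assoc]
    exact mul_le_mul (hc _ (by omega))
      (prod_Icc_le_prod_mul_pow (fun _ => norm_nonneg _)
        (fun j hj => norm_ff_le hr1 (mem_Icc.mp hj).1) (fun j hj => norm_ff_le_of_lt hq hj) i)
      (prod_nonneg fun _ _ => norm_nonneg _) hB
  refine (norm_tsum_sub_sum_range_le_of_geometric (div_nonneg hx0 (by linarith)) hρ1 K
    hterm).trans_eq ?_
  have hρ : (1 - x / (1 - x))⁻¹ = (1 - x) / (1 - 2 * x) := by
    rw [one_sub_div (by linarith), inv_div]
    ring_nf
  rw [hρ, hhead]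
  ring

end Tail

theorem stmt_2_general (t : ℕ) (K : ℕ) (q : ℂ)
    (hq : ‖q‖ ^ brk t (K + 1) < 1 / 2) :
    ‖Nfun t q - NK t K q‖ ≤
      (1 - ‖q‖ ^ brk t (K + 1)) / (1 - 2 * ‖q‖ ^ brk t (K + 1)) *
        (∏ j ∈ Finset.Icc 1 K, (1 - ‖q‖ ^ brk t j)⁻¹) *
        ‖q‖ ^ (brk t K + ∑ j ∈ Finset.Icc 1 K, brk t j) ∧
    ‖Dfun t q - DK t K q‖ ≤
      (1 - ‖q‖ ^ brk t (K + 1)) / (1 - 2 * ‖q‖ ^ brk t (K + 1)) *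
        (∏ j ∈ Finset.Icc 1 K, (1 - ‖q‖ ^ brk t j)⁻¹) *
        ‖q‖ ^ (∑ j ∈ Finset.Icc 1 K, brk t j) := by
  have hr1 := norm_lt_one_of_pow_brk_lt hq
  constructor
  · have hc : ∀ k, K ≤ k → ‖q ^ brk t k‖ ≤ ‖q‖ ^ brk t K := fun k hk => by
      rw [norm_pow]
      exact pow_le_pow_of_le_one (norm_nonneg q) hr1.le (brk_mono t hk)
    rw [pow_add, ← mul_assoc]
    exact norm_tsum_sub_sum_range_le hq (pow_nonneg (norm_nonneg q) _) hc
  · simpa only [mul_one, Dfun, DK] using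
      norm_tsum_sub_sum_range_le (c := fun _ => 1) hq zero_le_one (fun _ _ => by simp)

theorem stmt_2 (t : ℕ) (ht : 2 ≤ t) (K : ℕ) (q : ℂ)
    (hq : ‖q‖ ^ brk t (K + 1) < 1 / 2) :
    ‖Nfun t q - NK t K q‖ ≤
      (1 - ‖q‖ ^ brk t (K + 1)) / (1 - 2 * ‖q‖ ^ brk t (K + 1)) *
        (∏ j ∈ Finset.Icc 1 K, (1 - ‖q‖ ^ brk t j)⁻¹) *
        ‖q‖ ^ (brk t K + ∑ j ∈ Finset.Icc 1 K, brk t j) ∧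
    ‖Dfun t q - DK t K q‖ ≤
      (1 - ‖q‖ ^ brk t (K + 1)) / (1 - 2 * ‖q‖ ^ brk t (K + 1)) *
        (∏ j ∈ Finset.Icc 1 K, (1 - ‖q‖ ^ brk t j)⁻¹) *
        ‖q‖ ^ (∑ j ∈ Finset.Icc 1 K, brk t j) :=
  stmt_2_general t K q hq
end
end
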